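/- Let f : {0,1,2}^U → ℝ≥0 be bisubmodular with |U| = n, let o ∈ {1,2}^U, and define F_{i,j} as the average of f(T(A,B)) over all disjoint A, B ⊆ U with |A| = i, |B| = j, where T(A,B) agrees with o on A, disagrees with o (takes the other value in {1,2}) on B, and is 0 elsewhere. Then for all 0 ≤ i ≤ n, F_{i,n−i} ≥ (i(i−1)/(n(n−1))) · F_{n,0}. -/
import Mathlib


/-- min₀: coordinate-wise operation. -/
def min0 {k : ℕ} (a b : Fin (k+1)) : Fin (k+1) :=
  if a ≠ 0 ∧ b ≠ 0 ∧ a ≠ b then 0 else min a b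

/-- max₀: coordinate-wise operation. -/
def max0 {k : ℕ} (a b : Fin (k+1)) : Fin (k+1) :=
  if a ≠ 0 ∧ b ≠ 0 ∧ a ≠ b then 0 else max a b

/-- k-submodularity. -/
def kSubmodular {U : Type*} {k : ℕ} (f : (U → Fin (k+1)) → ℝ) : Prop :=
  ∀ s t : U → Fin (k+1),
    f (fun e => min0 (s e) (t e)) + f (fun e => max0 (s e) (t e)) ≤ f s + f t

/-- restriction of a vector to a finset. -/
def restrict {U : Type*} [DecidableEq U] {k : ℕ} (x : U → Fin (k+1)) (S : Finset U) :
    U → Fin (k+1) := fun e => if e ∈ S then x e else 0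

lemma min0_self {k : ℕ} (a : Fin (k+1)) : min0 a a = a := by
  simp [min0]

lemma max0_self {k : ℕ} (a : Fin (k+1)) : max0 a a = a := by
  simp [max0]

lemma min0_zero_right {k : ℕ} (a : Fin (k+1)) : min0 a 0 = 0 := by
  simp [min0, min_eq_right (Fin.zero_le a)]

lemma min0_zero_left {k : ℕ} (a : Fin (k+1)) : min0 0 a = 0 := by
  simp [min0, min_eq_left (Fin.zero_le a)]

lemma max0_zero_right {k : ℕ} (a : Fin (k+1)) : max0 a 0 = a := by
  simp [max0, max_eq_left (Fin.zero_le a)]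

lemma max0_zero_left {k : ℕ} (a : Fin (k+1)) : max0 0 a = a := by
  simp [max0, max_eq_right (Fin.zero_le a)]

lemma min0_conflict {k : ℕ} {a b : Fin (k+1)} (ha : a ≠ 0) (hb : b ≠ 0) (hab : a ≠ b) :
    min0 a b = 0 := by simp [min0, ha, hb, hab]

lemma max0_conflict {k : ℕ} {a b : Fin (k+1)} (ha : a ≠ 0) (hb : b ≠ 0) (hab : a ≠ b) :
    max0 a b = 0 := by simp [max0, ha, hb, hab]

section RS
variable {U : Type*} [DecidableEq U] [Fintype U]
open Finset

/-- restrictions of a fixed vector give a submodular set function -/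
lemma restrict_submod {f : (U → Fin 3) → ℝ} (hsub : kSubmodular f) (s : U → Fin 3)
    (Y Z : Finset U) :
    f (restrict s (Y ∩ Z)) + f (restrict s (Y ∪ Z)) ≤ f (restrict s Y) + f (restrict s Z) := by
  have h := hsub (restrict s Y) (restrict s Z)
  have h1 : (fun e => min0 (restrict s Y e) (restrict s Z e)) = restrict s (Y ∩ Z) := by
    funext e
    by_cases hY : e ∈ Y <;> by_cases hZ : e ∈ Z <;>
      simp [_root_.restrict, hY, hZ, min0_self, min0_zero_left, min0_zero_right]
  have h2 : (fun e => max0 (restrict s Y e) (restrict s Z e)) = restrict s (Y ∪ Z) := by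
    funext e
    by_cases hY : e ∈ Y <;> by_cases hZ : e ∈ Z <;>
      simp [_root_.restrict, hY, hZ, max0_self, max0_zero_left, max0_zero_right]
  rwa [h1, h2] at h

/-- classic drop lemma for a submodular nonneg set function -/
lemma drop_lemma {f : (U → Fin 3) → ℝ} (hsub : kSubmodular f) (s : U → Fin 3) (C : Finset U) :
    ((C.card : ℝ) - 1) * f (restrict s univ) + f (restrict s (univ \ C)) ≤
      ∑ x ∈ C, f (restrict s (univ \ {x})) := by
  induction C using Finset.induction with
  | empty => simp
  | @insert a C' ha ih =>
    rw [Finset.sum_insert ha]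
    have hsm := restrict_submod hsub s (univ \ {a}) (univ \ C')
    have e1 : (univ \ {a}) ∩ (univ \ C') = univ \ insert a C' := by
      ext e; simp [and_comm]
    have e2 : (univ \ {a}) ∪ (univ \ C') = univ := by
      ext e
      simp only [Finset.mem_union, Finset.mem_sdiff, Finset.mem_univ, true_and,
        Finset.mem_singleton, iff_true]
      rcases eq_or_ne e a with rfl | h
      · exact Or.inr ha
      · exact Or.inl h
    rw [e1, e2] at hsm
    rw [Finset.card_insert_of_notMem ha]
    push_cast
    linarith
end RS

section Main
variable {U : Type*} [Fintype U] [DecidableEq U]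
open Finset

variable {f : (U → Fin 3) → ℝ} {o : U → Fin 3} {T : Finset U → Finset U → U → Fin 3}

lemma obar_ne_zero (ho : ∀ e, o e ≠ 0) (e : U) :
    (if o e = 1 then 2 else 1 : Fin 3) ≠ 0 := by
  split <;> decide

lemma obar_ne_o (ho : ∀ e, o e ≠ 0) (e : U) :
    o e ≠ (if o e = 1 then 2 else 1 : Fin 3) := by
  by_cases h : o e = 1
  · rw [if_pos h, h]; decide
  · rw [if_neg h]; exact h

lemma exchange (hsub : kSubmodular f) (ho : ∀ e, o e ≠ 0)
    (hT : ∀ A B e, T A B e =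
      if e ∈ A then o e else if e ∈ B then (if o e = 1 then 2 else 1) else 0)
    {A B : Finset U} {x : U} (hxA : x ∉ A) (hxB : x ∉ B) :
    f (T A B) + f (T A B) ≤ f (T (insert x A) B) + f (T A (insert x B)) := by
  have h := hsub (T (insert x A) B) (T A (insert x B))
  have hmin : (fun e => min0 (T (insert x A) B e) (T A (insert x B) e)) = T A B := by
    funext e
    rcases eq_or_ne e x with rfl | hex
    · rw [hT, hT, hT]
      simp only [Finset.mem_insert_self, if_pos, hxA, hxB, if_neg, if_false]
      exact min0_conflict (ho e) (obar_ne_zero ho e) (obar_ne_o ho e)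
    · have e1 : T (insert x A) B e = T A B e := by
        rw [hT, hT]; simp [Finset.mem_insert, hex]
      have e2 : T A (insert x B) e = T A B e := by
        rw [hT, hT]; simp [Finset.mem_insert, hex]
      rw [e1, e2, min0_self]
  have hmax : (fun e => max0 (T (insert x A) B e) (T A (insert x B) e)) = T A B := by
    funext e
    rcases eq_or_ne e x with rfl | hex
    · rw [hT, hT, hT]
      simp only [Finset.mem_insert_self, if_pos, hxA, hxB, if_neg, if_false]
      exact max0_conflict (ho e) (obar_ne_zero ho e) (obar_ne_o ho e)
    · have e1 : T (insert x A) B e = T A B e := by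
        rw [hT, hT]; simp [Finset.mem_insert, hex]
      have e2 : T A (insert x B) e = T A B e := by
        rw [hT, hT]; simp [Finset.mem_insert, hex]
      rw [e1, e2, max0_self]
  rw [hmin, hmax] at h
  exact h

lemma eps_lemma (hnn : ∀ s, 0 ≤ f s) (hsub : kSubmodular f) (ho : ∀ e, o e ≠ 0)
    (hT : ∀ A B e, T A B e =
      if e ∈ A then o e else if e ∈ B then (if o e = 1 then 2 else 1) else 0)
    (A : Finset U) :
    ((A.card : ℝ) - 2) * f (T A (univ \ A)) ≤
      ∑ x ∈ A, f (T (A.erase x) (univ \ A.erase x)) := by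
  have hres : ∀ x ∈ A, restrict (T A (univ \ A)) (univ \ {x}) = T (A.erase x) (univ \ A) := by
    intro x hx; funext e
    rcases eq_or_ne e x with rfl | hex
    · show (if e ∈ univ \ ({e} : Finset U) then _ else 0) = _
      rw [if_neg (by simp), hT]
      rw [if_neg (by simp [Finset.mem_erase]), if_neg (by simp [hx])]
    · show (if e ∈ univ \ ({x} : Finset U) then T A (univ \ A) e else 0) = _
      rw [if_pos (by simp [hex]), hT, hT]
      simp [Finset.mem_erase, hex]
  have hdrop := drop_lemma hsub (T A (univ \ A)) A
  have hruniv : restrict (T A (univ \ A)) univ = T A (univ \ A) := by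
    funext e; show (if e ∈ univ then _ else 0) = _; rw [if_pos (Finset.mem_univ e)]
  rw [hruniv, Finset.sum_congr rfl (fun x hx => by rw [hres x hx])] at hdrop
  have hex : ∀ x ∈ A, f (T (A.erase x) (univ \ A)) + f (T (A.erase x) (univ \ A)) ≤
      f (T A (univ \ A)) + f (T (A.erase x) (univ \ A.erase x)) := by
    intro x hx
    have hins : insert x (univ \ A) = univ \ A.erase x := by
      ext e; simp [Finset.mem_erase]; tauto
    have h := exchange hsub ho hT (A := A.erase x) (B := univ \ A) (x := x)
      (Finset.notMem_erase x A) (by simp [hx])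
    rwa [Finset.insert_erase hx, hins] at h
  have hsum := Finset.sum_le_sum hex
  rw [Finset.sum_add_distrib, Finset.sum_add_distrib, Finset.sum_const, nsmul_eq_mul] at hsum
  have h0 := hnn (restrict (T A (univ \ A)) (univ \ A))
  linarith

end Main

section Count
variable {U : Type*} [Fintype U] [DecidableEq U]
open Finset

lemma count_lemma (m : ℕ) (g : Finset U → ℝ) :
    ∑ A ∈ Finset.univ.powersetCard (m+1), ∑ x ∈ A, g (A.erase x)
      = ∑ B ∈ Finset.univ.powersetCard m, ((Fintype.card U - m : ℕ) : ℝ) * g B := by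
  have L2 : ∀ x : U, ∑ A ∈ (Finset.univ.powersetCard (m+1)).filter (x ∈ ·), g (A.erase x)
      = ∑ B ∈ (Finset.univ.powersetCard m).filter (x ∉ ·), g B := by
    intro x
    refine Finset.sum_bij' (fun A _ => A.erase x) (fun B _ => insert x B) ?_ ?_ ?_ ?_ ?_
    · intro A hA
      rw [Finset.mem_filter, Finset.mem_powersetCard] at hA ⊢
      refine ⟨⟨Finset.subset_univ _, ?_⟩, Finset.notMem_erase x A⟩
      rw [Finset.card_erase_of_mem hA.2, hA.1.2]
      rfl
    · intro B hB
      rw [Finset.mem_filter, Finset.mem_powersetCard] at hB ⊢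
      refine ⟨⟨Finset.subset_univ _, ?_⟩, Finset.mem_insert_self x B⟩
      rw [Finset.card_insert_of_notMem hB.2, hB.1.2]
    · intro A hA
      rw [Finset.mem_filter] at hA
      exact Finset.insert_erase hA.2
    · intro B hB
      rw [Finset.mem_filter] at hB
      exact Finset.erase_insert hB.2
    · intro A _; rfl
  calc ∑ A ∈ Finset.univ.powersetCard (m+1), ∑ x ∈ A, g (A.erase x)
      = ∑ A ∈ Finset.univ.powersetCard (m+1), ∑ x : U,
          if x ∈ A then g (A.erase x) else 0 := by
        refine Finset.sum_congr rfl fun A _ => ?_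
        rw [Finset.sum_ite_mem, Finset.univ_inter]
    _ = ∑ x : U, ∑ A ∈ Finset.univ.powersetCard (m+1),
          if x ∈ A then g (A.erase x) else 0 := Finset.sum_comm
    _ = ∑ x : U, ∑ A ∈ (Finset.univ.powersetCard (m+1)).filter (x ∈ ·),
          g (A.erase x) := by
        refine Finset.sum_congr rfl fun x _ => ?_
        rw [Finset.sum_filter]
    _ = ∑ x : U, ∑ B ∈ (Finset.univ.powersetCard m).filter (x ∉ ·), g B := by
        exact Finset.sum_congr rfl fun x _ => L2 x
    _ = ∑ x : U, ∑ B ∈ Finset.univ.powersetCard m, if x ∉ B then g B else 0 := by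
        refine Finset.sum_congr rfl fun x _ => ?_
        rw [Finset.sum_filter]
    _ = ∑ B ∈ Finset.univ.powersetCard m, ∑ x : U,
          if x ∉ B then g B else 0 := Finset.sum_comm
    _ = ∑ B ∈ Finset.univ.powersetCard m, ((Fintype.card U - m : ℕ) : ℝ) * g B := by
        refine Finset.sum_congr rfl fun B hB => ?_
        rw [Finset.sum_ite, Finset.sum_const, Finset.sum_const_zero, add_zero, nsmul_eq_mul]
        congr 1
        have : Finset.univ.filter (fun x => x ∉ B) = Finset.univ \ B := by
          rw [Finset.sdiff_eq_filter]
        rw [this, Finset.card_sdiff_of_subset (Finset.subset_univ B), Finset.card_univ,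
          (Finset.mem_powersetCard.mp hB).2]

end Count

section Step
variable {U : Type*} [Fintype U] [DecidableEq U]
open Finset

variable {f : (U → Fin 3) → ℝ} {o : U → Fin 3} {T : Finset U → Finset U → U → Fin 3}

lemma step_lemma (hnn : ∀ s, 0 ≤ f s) (hsub : kSubmodular f) (ho : ∀ e, o e ≠ 0)
    (hT : ∀ A B e, T A B e =
      if e ∈ A then o e else if e ∈ B then (if o e = 1 then 2 else 1) else 0)
    (m : ℕ) :
    ((m : ℝ) - 1) * ∑ A ∈ Finset.univ.powersetCard (m+1), f (T A (Finset.univ \ A)) ≤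
      ((Fintype.card U - m : ℕ) : ℝ) *
        ∑ B ∈ Finset.univ.powersetCard m, f (T B (Finset.univ \ B)) := by
  have h1 : ∀ A ∈ Finset.univ.powersetCard (m+1),
      ((m : ℝ) - 1) * f (T A (Finset.univ \ A)) ≤
        ∑ x ∈ A, f (T (A.erase x) (Finset.univ \ A.erase x)) := by
    intro A hA
    have hcard : A.card = m + 1 := (Finset.mem_powersetCard.mp hA).2
    have h := eps_lemma hnn hsub ho hT A
    rw [hcard] at h
    push_cast at h
    linarith
  have h2 := Finset.sum_le_sum h1
  rw [← Finset.mul_sum] at h2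
  rw [count_lemma m (fun B => f (T B (Finset.univ \ B))), ← Finset.mul_sum] at h2
  exact h2

end Step

theorem stmt_11 {U : Type*} [Fintype U] [DecidableEq U] {n : ℕ}
    (hn : n = Fintype.card U) (hn2 : 2 ≤ n)
    (f : (U → Fin 3) → ℝ) (hnn : ∀ s, 0 ≤ f s) (hsub : kSubmodular f)
    (o : U → Fin 3) (ho : ∀ e, o e ≠ 0)
    (T : Finset U → Finset U → U → Fin 3)
    (hT : ∀ A B e, T A B e =
      if e ∈ A then o e else if e ∈ B then (if o e = 1 then 2 else 1) else 0)
    (F : ℕ → ℕ → ℝ)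
    (hF : ∀ i j, F i j =
      (∑ A ∈ Finset.univ.powersetCard i, ∑ B ∈ (Finset.univ \ A).powersetCard j, f (T A B)) /
        ((n.choose i : ℝ) * ((n - i).choose j : ℝ)))
    (i : ℕ) (hi : i ≤ n) :
    ((i : ℝ) * ((i : ℝ) - 1)) / ((n : ℝ) * ((n : ℝ) - 1)) * F n 0 ≤ F i (n - i) := by
  classical
  set p : ℕ → ℝ := fun m => ∑ A ∈ Finset.univ.powersetCard m, f (T A (Finset.univ \ A))
    with hp
  have hpnn : ∀ m, 0 ≤ p m := fun m => Finset.sum_nonneg fun A _ => hnn _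
  have hcardU : Fintype.card U = n := hn.symm
  have hFm : ∀ m, m ≤ n → F m (n - m) = p m / (n.choose m : ℝ) := by
    intro m hm
    rw [hF]
    have hinner : ∀ A ∈ Finset.univ.powersetCard m,
        ∑ B ∈ (Finset.univ \ A).powersetCard (n - m), f (T A B)
          = f (T A (Finset.univ \ A)) := by
      intro A hA
      have hAcard : A.card = m := (Finset.mem_powersetCard.mp hA).2
      have hc : (Finset.univ \ A).card = n - m := by
        rw [Finset.card_sdiff_of_subset (Finset.subset_univ A), Finset.card_univ, hcardU, hAcard]
      rw [← hc, Finset.powersetCard_self, Finset.sum_singleton]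
    rw [Finset.sum_congr rfl hinner, Nat.choose_self, Nat.cast_one, mul_one]
  have huniv : Finset.univ.powersetCard n = ({Finset.univ} : Finset (Finset U)) := by
    rw [hn, ← Finset.card_univ, Finset.powersetCard_self]
  have hTuniv : f (T Finset.univ ∅) = f o := by
    congr 1
    funext e
    rw [hT, if_pos (Finset.mem_univ e)]
  have hpn : p n = f o := by
    rw [hp]
    simp only [huniv, Finset.sum_singleton, Finset.sdiff_self]
    exact hTuniv
  have hFn : F n 0 = f o := by
    rw [hF, huniv, Finset.sum_singleton, Finset.powersetCard_zero, Finset.sum_singleton,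
      Nat.choose_self, Nat.sub_self, Nat.choose_self, hTuniv]
    norm_num
  rcases lt_or_ge i 2 with hi1 | h2i
  · rw [hFm i hi]
    have hz : (i : ℝ) * ((i : ℝ) - 1) = 0 := by
      interval_cases i <;> norm_num
    rw [hz, zero_div, zero_mul]
    have := hpnn i
    positivity
  · -- main case 2 ≤ i
    have claim : ∀ k, i + k ≤ n →
        (i : ℝ) * ((i : ℝ) - 1) * (n.choose i : ℝ) * p (i + k) ≤
        ((i + k : ℕ) : ℝ) * (((i + k : ℕ) : ℝ) - 1) * (n.choose (i + k) : ℝ) * p i := by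
      intro k
      induction k with
      | zero => intro _; simp
      | succ k ih =>
        intro hk1
        have hk : i + k ≤ n := by omega
        have ihh := ih hk
        have hstep := step_lemma hnn hsub ho hT (m := i + k)
        rw [hcardU] at hstep
        have hid : ((n - (i+k) : ℕ) : ℝ) * (n.choose (i+k) : ℝ)
            = ((i+k+1 : ℕ) : ℝ) * (n.choose (i+k+1) : ℝ) := by
          have h := Nat.choose_succ_right_eq n (i+k)
          have h2 := congrArg (Nat.cast : ℕ → ℝ) h
          push_cast at h2 ⊢
          linarith
        have hik : i + (k+1) = (i+k) + 1 := by omega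
        rw [hik]
        set m := i + k with hm
        have hstep' : ((m:ℝ) - 1) * p (m+1) ≤ ((n - m : ℕ):ℝ) * p m := hstep
        set a := (i : ℝ) * ((i : ℝ) - 1) * (n.choose i : ℝ) with hadef
        have ha : 0 ≤ a := by
          have h2r : (2:ℝ) ≤ (i:ℝ) := by exact_mod_cast h2i
          have hc : (0:ℝ) ≤ (n.choose i : ℝ) := Nat.cast_nonneg _
          have hii : (0:ℝ) ≤ (i:ℝ) * ((i:ℝ) - 1) := by nlinarith
          exact mul_nonneg hii hc
        have hm2 : (2:ℝ) ≤ (m:ℝ) := by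
          have : 2 ≤ m := le_trans h2i (Nat.le_add_right i k)
          exact_mod_cast this
        have e1 : a * (((m:ℝ) - 1) * p (m+1)) ≤ a * (((n - m : ℕ):ℝ) * p m) :=
          mul_le_mul_of_nonneg_left hstep' ha
        have e2 : ((n - m : ℕ):ℝ) * (a * p m) ≤
            ((n - m : ℕ):ℝ) * ((m:ℝ) * ((m:ℝ) - 1) * (n.choose m : ℝ) * p i) := by
          apply mul_le_mul_of_nonneg_left _ (Nat.cast_nonneg _)
          have := ihh
          push_cast at this
          convert this using 2 <;> push_cast <;> ring
        have e3 : ((n - m : ℕ):ℝ) * ((m:ℝ) * ((m:ℝ) - 1) * (n.choose m : ℝ) * p i)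
            = ((m:ℝ) - 1) * (((m:ℝ) + 1) * (m:ℝ) * (n.choose (m+1) : ℝ) * p i) := by
          have h' := hid
          push_cast at h'
          linear_combination ((m:ℝ) * ((m:ℝ) - 1) * p i) * h'
        have hcancel : a * p (m+1) * ((m:ℝ) - 1) ≤
            ((((m:ℝ) + 1) * (m:ℝ) * (n.choose (m+1) : ℝ) * p i)) * ((m:ℝ) - 1) := by
          nlinarith [e1, e2, e3]
        have hpos : (0:ℝ) < (m:ℝ) - 1 := by linarith
        have hfin2 := le_of_mul_le_mul_right hcancel hpos
        push_cast at hfin2 ⊢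
        linarith
    have hfin := claim (n - i) (by omega)
    have hni : i + (n - i) = n := by omega
    rw [hni, Nat.choose_self, Nat.cast_one] at hfin
    rw [hFm i hi, hFn, ← hpn]
    have hnpos : (0:ℝ) < (n:ℝ) * ((n:ℝ) - 1) := by
      have : (2:ℝ) ≤ (n:ℝ) := by exact_mod_cast hn2
      nlinarith
    have hCpos : (0:ℝ) < (n.choose i : ℝ) := by
      exact_mod_cast Nat.choose_pos hi
    rw [div_mul_eq_mul_div, div_le_div_iff₀ hnpos hCpos]
    nlinarith [hfin, hpnn i, hpnn n]
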